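/- arXiv:2204.12691 — 2 statements merged into one kernel-verified Lean document; each statement's English description precedes it below -/
import Mathlib

section
/- The McMillan octupole map (q,p) ↦ (p, -q + f(p)) with f(p) = -2εp/(p²+Γ) preserves the invariant K(q,p) = p²q² + Γ(p² + q²) + 2εpq; that is, K(p, -q + f(p)) = K(q,p) whenever p² + Γ ≠ 0. -/
/-- The McMillan octupole map preserves its biquadratic invariant. -/
theorem mcmillan_octupole_invariant (Γ ε : ℝ)
    (f : ℝ → ℝ) (hf : ∀ p, p^2 + Γ ≠ 0 → f p = -(2*ε*p) / (p^2 + Γ))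
    (K : ℝ → ℝ → ℝ)
    (hK : ∀ q p, K q p = p^2*q^2 + Γ*(p^2 + q^2) + 2*ε*p*q) :
    ∀ q p : ℝ, p^2 + Γ ≠ 0 → K p (-q + f p) = K q p := by
  intro q p h
  rw [hK, hK, hf p h]
  field_simp
  ring
end

section
/- For a general odd-force map M(q,p) = (p, -q + ap + (c/6)p³) with a ≠ 0, the function K(q,p) = p² - apq + q² - (c/(6a))p²q² satisfies: K(M(q,p)) - K(q,p) is a polynomial in q,p whose homogeneous components of degree ≤ 4 all vanish. -/
/-!
The coefficient `c / (6a)` of `K` is exactly the one that cancels the quartic terms: writing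
`u = c / (6a)`, so that `c / 6 = a u`, the difference `K ∘ M - K` collapses to
`p⁵ · u² (2a q - a² p - a² u p³)`. Being divisible by the degree-five monomial `p⁵`, it has
no homogeneous components of degree below five.
-/

open MvPolynomial

namespace MvPolynomial

theorem homogeneousComponent_mul_eq_zero_of_lt {σ R : Type*} [CommSemiring R]
    {ψ : MvPolynomial σ R} {n d : ℕ} (hψ : ψ.IsHomogeneous n) (hd : d < n)
    (φ : MvPolynomial σ R) : homogeneousComponent d (ψ * φ) = 0 := by
  rw [← sum_homogeneousComponent φ, Finset.mul_sum, map_sum]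
  refine Finset.sum_eq_zero fun k _ => ?_
  rw [homogeneousComponent_of_mem (hψ.mul (homogeneousComponent_isHomogeneous k φ)),
    if_neg (by omega)]

end MvPolynomial

theorem octupole_defect_eq (a c : ℝ) (ha : a ≠ 0) :
    bind₁ (fun i : Fin 2 =>
        (if i = 0 then X 1 else -X 0 + C a * X 1 + C (c/6) * X 1 ^ 3 : MvPolynomial (Fin 2) ℝ))
        (X 1 ^ 2 - C a * X 1 * X 0 + X 0 ^ 2 - C (c/(6*a)) * X 1 ^ 2 * X 0 ^ 2)
      - (X 1 ^ 2 - C a * X 1 * X 0 + X 0 ^ 2 - C (c/(6*a)) * X 1 ^ 2 * X 0 ^ 2) =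
      X 1 ^ 5 * (C ((c/(6*a)) ^ 2) *
        (2 * C a * X 0 - C a ^ 2 * X 1 - C a ^ 2 * C (c/(6*a)) * X 1 ^ 3)) := by
  set u := c / (6 * a) with hu
  have hc : c / 6 = a * u := by rw [hu]; field_simp
  simp only [map_sub, map_add, map_mul, map_pow, bind₁_X_right, bind₁_C_right,
    Fin.isValue, one_ne_zero, if_true, if_false, hc]
  ring

/-- First-order approximate invariant for the cubic (octupole-like)
truncated map: the homogeneous components of degree ≤ 4 of
K∘M - K all vanish. -/
theorem octupole_approx_invariant (a c : ℝ) (ha : a ≠ 0) :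
    let q : MvPolynomial (Fin 2) ℝ := X 0
    let p : MvPolynomial (Fin 2) ℝ := X 1
    let K : MvPolynomial (Fin 2) ℝ :=
      p^2 - C a * p * q + q^2 - C (c/(6*a)) * p^2 * q^2
    let Kcomp : MvPolynomial (Fin 2) ℝ :=
      bind₁ (fun i => if i = 0 then p else -q + C a * p + C (c/6) * p^3) K
    ∀ d : ℕ, d ≤ 4 → homogeneousComponent d (Kcomp - K) = 0 := by
  intro q p K Kcomp d hd
  rw [show Kcomp - K = _ from octupole_defect_eq a c ha]
  exact homogeneousComponent_mul_eq_zero_of_lt (isHomogeneous_X_pow 1 5) (by omega) _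
end
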